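/- The normal trace of φ̃_h on the lower spherical cap equals the normal trace of the vertical unit vector e₃: for every r ∈ (0,δ), writing z_s(r) = h + γ_s(r) and using the normal n = −r e_r + √(1−r²) e_z to the sphere, one has the identity (r²/2)·∂_zΨ(r, z_s(r)) + (√(1−r²)/(2r))·∂_r[r²Ψ(r,z)]|_{z = z_s(r)} = √(1−r²), where ∂_r is the partial derivative in r at fixed z. -/

import Mathlib

/-! Write `H(r) = h + γ_s(r)`, so the cap is `z = H(r)`, where `t = z / H(r) = 1`. Since
`P₁ + P₂ + P₃ = 1` identically, `Ψ = 1` on the cap, and differentiating this identity shows that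
the `r`-derivatives of the coefficients cancel there. With `D = ∂_tΦ(r, 1)` this leaves
`∂_zΨ = D / H` and `∂_r[r²Ψ] = 2r − r² D H' / H`, where `H' = r / √(1 − r²)`; in the normal trace
the two `D`-terms cancel and `√(1 − r²)` remains. -/

open Real MeasureTheory intervalIntegral

noncomputable section

/-- `γ_s(r) = 1 - √(1 - r²)`. -/
def gam (r : ℝ) : ℝ := 1 - Real.sqrt (1 - r ^ 2)

/-- `α_P(r) = (h + γ_s(r)) / β_Ω`. -/
def aP (βΩ h r : ℝ) : ℝ := (h + gam r) / βΩ

/-- `α_S(r) = (1/β_S + 2) (h + γ_s(r))`. -/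
def aS (βS h r : ℝ) : ℝ := (1 / βS + 2) * (h + gam r)

/-- The cubic `Φ(r,t) = P₁(r) t + P₂(r) t² + P₃(r) t³` of the slip case. -/
def Phi (βS βΩ h r t : ℝ) : ℝ :=
  6 * (2 + aS βS h r) / (12 + 4 * (aS βS h r + aP βΩ h r) + aS βS h r * aP βΩ h r) * t +
  3 * (2 + aS βS h r) * aP βΩ h r / (12 + 4 * (aS βS h r + aP βΩ h r) + aS βS h r * aP βΩ h r) * t ^ 2 +
  -(2 * (aS βS h r + aS βS h r * aP βΩ h r + aP βΩ h r)) / (12 + 4 * (aS βS h r + aP βΩ h r) + aS βS h r * aP βΩ h r) * t ^ 3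

/-- `Ψ(r,z) = Φ(r, z / (h + γ_s(r)))`. -/
def Psi (βS βΩ h r z : ℝ) : ℝ := Phi βS βΩ h r (z / (h + gam r))

/-- Partial derivative in the first (`r`) variable. -/
def dR (f : ℝ → ℝ → ℝ) : ℝ → ℝ → ℝ := fun r z => deriv (fun r' => f r' z) r

/-- Partial derivative in the second (`z`) variable. -/
def dZ (f : ℝ → ℝ → ℝ) : ℝ → ℝ → ℝ := fun r z => deriv (fun z' => f r z') z

open Filter Topology

def Δ (βS βΩ h r : ℝ) : ℝ := 12 + 4 * (aS βS h r + aP βΩ h r) + aS βS h r * aP βΩ h r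

def P₁ (βS βΩ h r : ℝ) : ℝ := 6 * (2 + aS βS h r) / Δ βS βΩ h r

def P₂ (βS βΩ h r : ℝ) : ℝ := 3 * (2 + aS βS h r) * aP βΩ h r / Δ βS βΩ h r

def P₃ (βS βΩ h r : ℝ) : ℝ :=
  -(2 * (aS βS h r + aS βS h r * aP βΩ h r + aP βΩ h r)) / Δ βS βΩ h r

theorem Phi_eq (βS βΩ h r t : ℝ) :
    Phi βS βΩ h r t = P₁ βS βΩ h r * t + P₂ βS βΩ h r * t ^ 2 + P₃ βS βΩ h r * t ^ 3 :=
  rfl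

theorem P₁_add_P₂_add_P₃ {βS βΩ h r : ℝ} (hΔ : Δ βS βΩ h r ≠ 0) :
    P₁ βS βΩ h r + P₂ βS βΩ h r + P₃ βS βΩ h r = 1 := by
  rw [P₁, P₂, P₃, ← add_div, ← add_div, div_eq_one_iff_eq hΔ, Δ]
  ring

theorem gam_nonneg (r : ℝ) : 0 ≤ gam r := by
  have : √(1 - r ^ 2) ≤ 1 := Real.sqrt_le_one.mpr (by nlinarith)
  simp only [gam]
  linarith

theorem hasDerivAt_gam {r : ℝ} (hr : r ^ 2 < 1) : HasDerivAt gam (r / √(1 - r ^ 2)) r := by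
  have hs : 0 < √(1 - r ^ 2) := Real.sqrt_pos.mpr (by linarith)
  have h1 : HasDerivAt (fun r' : ℝ => 1 - r' ^ 2) (-(2 * r)) r := by
    simpa using (hasDerivAt_pow 2 r).const_sub 1
  refine (((Real.hasDerivAt_sqrt (by linarith)).comp r h1).const_sub 1).congr_deriv ?_
  field_simp

theorem Δ_pos {βS βΩ h : ℝ} (hβS : 0 ≤ βS) (hβΩ : 0 ≤ βΩ) (hh : 0 ≤ h) (r : ℝ) :
    0 < Δ βS βΩ h r := by
  have hH := add_nonneg hh (gam_nonneg r)
  have hS : 0 ≤ aS βS h r := by unfold aS; positivity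
  have hP : 0 ≤ aP βΩ h r := by unfold aP; positivity
  unfold Δ
  positivity

example {βS βΩ h r : ℝ} (hg : DifferentiableAt ℝ gam r) (hΔ : Δ βS βΩ h r ≠ 0) :
    DifferentiableAt ℝ (P₁ βS βΩ h) r ∧ DifferentiableAt ℝ (P₂ βS βΩ h) r ∧ DifferentiableAt ℝ (P₃ βS βΩ h) r := by
  unfold P₁ P₂ P₃ Δ aS aP at *
  refine ⟨?_, ?_, ?_⟩ <;> fun_prop (disch := assumption)

theorem hasDerivAt_cubic_div_self {c₁ c₂ c₃ H : ℝ} (hH : H ≠ 0) :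
    HasDerivAt (fun z => c₁ * (z / H) + c₂ * (z / H) ^ 2 + c₃ * (z / H) ^ 3)
      ((c₁ + 2 * c₂ + 3 * c₃) / H) H := by
  have ht : HasDerivAt (fun z => z / H) (1 / H) H := (hasDerivAt_id H).div_const H
  refine (((ht.const_mul c₁).add ((ht.fun_pow 2).const_mul c₂)).add
    ((ht.fun_pow 3).const_mul c₃)).congr_deriv ?_
  field_simp
  ring

theorem hasDerivAt_cubic_div_of_sum_eq_one {p q w H : ℝ → ℝ} {H' r₀ : ℝ}
    (hp : DifferentiableAt ℝ p r₀) (hq : DifferentiableAt ℝ q r₀) (hw : DifferentiableAt ℝ w r₀)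
    (hH : HasDerivAt H H' r₀) (hH0 : H r₀ ≠ 0) (hsum : ∀ᶠ r in 𝓝 r₀, p r + q r + w r = 1) :
    HasDerivAt (fun r => p r * (H r₀ / H r) + q r * (H r₀ / H r) ^ 2 + w r * (H r₀ / H r) ^ 3)
      (-(p r₀ + 2 * q r₀ + 3 * w r₀) * H' / H r₀) r₀ := by
  have hcoef : deriv p r₀ + deriv q r₀ + deriv w r₀ = 0 :=
    ((hp.hasDerivAt.add hq.hasDerivAt).add hw.hasDerivAt).unique
      ((hasDerivAt_const r₀ (1 : ℝ)).congr_of_eventuallyEq hsum)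
  have ht : HasDerivAt (fun r => H r₀ / H r) (-H' / H r₀) r₀ := by
    refine ((hH.inv hH0).const_mul (H r₀)).congr_deriv ?_
    field_simp
  refine (((hp.hasDerivAt.mul ht).add (hq.hasDerivAt.mul (ht.fun_pow 2))).add
    (hw.hasDerivAt.mul (ht.fun_pow 3))).congr_deriv ?_
  simp only [div_self hH0]
  linear_combination hcoef

theorem differentiableAt_P₁_P₂_P₃ {βS βΩ h r : ℝ} (hr : r ^ 2 < 1) (hΔ : Δ βS βΩ h r ≠ 0) :
    DifferentiableAt ℝ (P₁ βS βΩ h) r ∧ DifferentiableAt ℝ (P₂ βS βΩ h) r ∧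
      DifferentiableAt ℝ (P₃ βS βΩ h) r := by
  have hg : DifferentiableAt ℝ gam r := (hasDerivAt_gam hr).differentiableAt
  unfold P₁ P₂ P₃ Δ aS aP at *
  refine ⟨?_, ?_, ?_⟩ <;> fun_prop (disch := assumption)

theorem Psi_on_cap {βS βΩ h r : ℝ} (hΔ : Δ βS βΩ h r ≠ 0) (hH : h + gam r ≠ 0) :
    Psi βS βΩ h r (h + gam r) = 1 := by
  rw [Psi, Phi_eq, div_self hH, one_pow, one_pow, mul_one, mul_one, mul_one,
    P₁_add_P₂_add_P₃ hΔ]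

theorem dZ_Psi_on_cap {βS βΩ h r : ℝ} (hH : h + gam r ≠ 0) :
    dZ (Psi βS βΩ h) r (h + gam r) =
      (P₁ βS βΩ h r + 2 * P₂ βS βΩ h r + 3 * P₃ βS βΩ h r) / (h + gam r) :=
  (hasDerivAt_cubic_div_self hH).deriv

theorem hasDerivAt_Psi_on_cap {βS βΩ h r : ℝ} (hβS : 0 ≤ βS) (hβΩ : 0 ≤ βΩ) (hh : 0 < h)
    (hr : r ^ 2 < 1) :
    HasDerivAt (fun r' => Psi βS βΩ h r' (h + gam r))
      (-(P₁ βS βΩ h r + 2 * P₂ βS βΩ h r + 3 * P₃ βS βΩ h r) * (r / √(1 - r ^ 2)) /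
        (h + gam r)) r := by
  obtain ⟨h₁, h₂, h₃⟩ := differentiableAt_P₁_P₂_P₃ hr (Δ_pos hβS hβΩ hh.le r).ne'
  exact hasDerivAt_cubic_div_of_sum_eq_one h₁ h₂ h₃ ((hasDerivAt_gam hr).const_add h)
    (add_pos_of_pos_of_nonneg hh (gam_nonneg r)).ne'
    (.of_forall fun r' => P₁_add_P₂_add_P₃ (Δ_pos hβS hβΩ hh.le r').ne')

/-- On the lower spherical cap `z = z_s(r) = h + γ_s(r)` with (non-unit) normal
`n = −r e_r + √(1−r²) e_z`, the normal trace of `φ̃_h` equals that of `e₃`: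
`(r²/2) ∂_zΨ(r,z_s(r)) + (√(1−r²)/(2r)) ∂_r[r²Ψ(r,z)]|_{z=z_s(r)} = √(1−r²)`. -/
theorem tphi_normal_trace_on_sphere (δ βS βΩ h : ℝ) (hδ : δ ∈ Set.Ioo (0 : ℝ) (1 / 4))
    (hβS : 0 < βS) (hβΩ : 0 < βΩ) (hh : 0 < h) :
    ∀ r : ℝ, 0 < r → r < δ →
      r ^ 2 / 2 * dZ (Psi βS βΩ h) r (h + gam r) +
        Real.sqrt (1 - r ^ 2) / (2 * r) *
          deriv (fun r' => r' ^ 2 * Psi βS βΩ h r' (h + gam r)) r =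
      Real.sqrt (1 - r ^ 2) := by
  intro r hr₀ hrδ
  have hr : r ^ 2 < 1 := by nlinarith [hδ.2]
  have hs : 0 < √(1 - r ^ 2) := Real.sqrt_pos.mpr (by linarith)
  have hH : h + gam r ≠ 0 := (add_pos_of_pos_of_nonneg hh (gam_nonneg r)).ne'
  have hrad := (hasDerivAt_pow 2 r).fun_mul (hasDerivAt_Psi_on_cap hβS.le hβΩ.le hh hr)
  rw [dZ_Psi_on_cap hH, hrad.deriv, Psi_on_cap (Δ_pos hβS.le hβΩ.le hh.le r).ne' hH]
  field_simp
  ring
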